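/- For every dimension d ≥ 1, all ε, γ > 0, and every t ∈ ℝ^d, the Moreau decomposition for the Huber-regularized norm holds in explicit form: γ·Q_{1/γ,ε}(t/γ) + P_{γ,ε}(t) = t. -/

import Mathlib

open Classical

/-- The proximity map of `γ` times the Huber-regularized Euclidean norm. -/
noncomputable def proxHuber {d : ℕ} (γ ε : ℝ) (t : EuclideanSpace ℝ (Fin d)) :
    EuclideanSpace ℝ (Fin d) :=
  if t = 0 then 0 else (max (ε / (ε + γ)) (1 - γ / ‖t‖)) • t

/-- The dual proximity map `Q_{σ,ε}`. -/
noncomputable def dualProxHuber {d : ℕ} (σ ε : ℝ) (w : EuclideanSpace ℝ (Fin d)) :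
    EuclideanSpace ℝ (Fin d) :=
  if ‖w‖ ≤ 1 + σ * ε then (1 + σ * ε)⁻¹ • w else ‖w‖⁻¹ • w

/-!
Both maps rescale their argument. With `M = max ‖t‖ (γ + ε)` one has
`P_{γ,ε}(t) = (1 - γ / M) • t` and `γ • Q_{1/γ,ε}(t / γ) = (γ / M) • t`, and the two scalars add up to `1`.
-/

theorem dualProxHuber_eq_smul {d : ℕ} (σ ε : ℝ) (w : EuclideanSpace ℝ (Fin d)) :
    dualProxHuber σ ε w = (max ‖w‖ (1 + σ * ε))⁻¹ • w := by
  unfold dualProxHuber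
  split_ifs with hw
  · rw [max_eq_right hw]
  · rw [max_eq_left (not_le.1 hw).le]

theorem max_one_sub_div {γ a b : ℝ} (hγ : 0 ≤ γ) (ha : 0 < a) (hb : 0 < b) :
    max (1 - γ / a) (1 - γ / b) = 1 - γ / max a b := by
  rcases le_total a b with hab | hba
  · rw [max_eq_right hab, max_eq_right]
    linarith [div_le_div_of_nonneg_left hγ ha hab]
  · rw [max_eq_left hba, max_eq_left]
    linarith [div_le_div_of_nonneg_left hγ hb hba]

theorem proxHuber_eq_smul {d : ℕ} {γ ε : ℝ} (hγ : 0 ≤ γ) (hγε : 0 < γ + ε)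
    (t : EuclideanSpace ℝ (Fin d)) :
    proxHuber γ ε t = (1 - γ / max ‖t‖ (γ + ε)) • t := by
  unfold proxHuber
  split_ifs with ht
  · rw [ht, smul_zero]
  · have hε : ε / (ε + γ) = 1 - γ / (γ + ε) := by
      rw [add_comm ε, eq_sub_iff_add_eq, ← add_div, add_comm ε, div_self hγε.ne']
    rw [hε, max_one_sub_div hγ hγε (norm_pos_iff.2 ht), max_comm]

theorem huber_moreau_decomposition_general (d : ℕ) (ε γ : ℝ)
    (hε : 0 < ε) (hγ : 0 < γ) (t : EuclideanSpace ℝ (Fin d)) :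
    γ • dualProxHuber (1 / γ) ε (γ⁻¹ • t) + proxHuber γ ε t = t := by
  have hM : 0 < max ‖t‖ (γ + ε) := lt_max_of_lt_right (by linarith)
  have hscale : max ‖γ⁻¹ • t‖ (1 + 1 / γ * ε) = γ⁻¹ * max ‖t‖ (γ + ε) := by
    rw [norm_smul, Real.norm_of_nonneg (inv_nonneg.2 hγ.le),
      mul_max_of_nonneg _ _ (inv_nonneg.2 hγ.le)]
    congr 1
    field_simp
  rw [dualProxHuber_eq_smul, proxHuber_eq_smul hγ.le (by linarith), hscale, smul_smul,
    smul_smul, ← add_smul]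
  convert one_smul ℝ t using 2
  field_simp
  ring

/-- Moreau decomposition for the Huber-regularized norm in explicit form:
`γ Q_{1/γ,ε}(t/γ) + P_{γ,ε}(t) = t`. -/
theorem huber_moreau_decomposition (d : ℕ) (hd : 1 ≤ d) (ε γ : ℝ)
    (hε : 0 < ε) (hγ : 0 < γ) (t : EuclideanSpace ℝ (Fin d)) :
    γ • dualProxHuber (1 / γ) ε (γ⁻¹ • t) + proxHuber γ ε t = t :=
  huber_moreau_decomposition_general d ε γ hε hγ t
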